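/- arXiv:2110.08040 — 6 statements merged into one kernel-verified Lean document; each statement's English description precedes it below -/
import Mathlib

section
/- Let L be a complete lattice that is distributive and satisfies (MR). Then every equivalence class of the prime interval projectivity relation on Cm is a singleton: for all φ, ψ ∈ Cm, φ ∼ ψ implies φ = ψ. (This is the implication (i) ⇒ (ii) of Proposition 2 of the paper, which characterizes distributivity of a congruence lattice by triviality of the PIP relation.) -/
variable {L : Type*} [CompleteLattice L]

/-- `eta` is completely meet irreducible with (unique) cover `p`. -/
def IsCMIL (η p : L) : Prop := η < p ∧ ∀ β, η < β → p ≤ β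

/-- A single up or down transposition between the intervals `I[pq.1, pq.2]`
and `I[rs.1, rs.2]`. -/
def PerspL (pq rs : L × L) : Prop :=
  (pq.1 = pq.2 ⊓ rs.1 ∧ rs.2 = pq.2 ⊔ rs.1) ∨
    (rs.1 = rs.2 ⊓ pq.1 ∧ pq.2 = rs.2 ⊔ pq.1)

/-- Projectivity of intervals: a finite chain of up and down transpositions. -/
def ProjectiveL : L × L → L × L → Prop := Relation.ReflTransGen PerspL

/-- Prime interval projectivity: the prime intervals `I[φ,φ⁺]` and `I[ψ,ψ⁺]`
over completely meet irreducible elements are projective. -/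
def PIPL (φ ψ : L) : Prop :=
  ∃ p q, IsCMIL φ p ∧ IsCMIL ψ q ∧ ProjectiveL (φ, p) (ψ, q)

/-!
A completely meet irreducible element `η` of a distributive lattice is meet prime, so the
property "`a ≤ η` but `b ≰ η`" of an interval `I[a,b]` is preserved by transpositions, hence
by projectivity. The prime interval `I[φ,φ⁺]` has this property for `η = φ`, so a projective
`I[ψ,ψ⁺]` has it too, giving `ψ ≤ φ`; by symmetry `φ ≤ ψ`.
-/

def SeparatedBy (I : L × L) (η : L) : Prop := I.1 ≤ η ∧ ¬ I.2 ≤ η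

theorem IsCMIL.infIrred {η p : L} (h : IsCMIL η p) : InfIrred η := by
  refine ⟨h.1.not_isMax, fun b c hbc => ?_⟩
  by_contra! hne
  have hb : η < b := lt_of_le_of_ne (hbc ▸ inf_le_left) hne.1.symm
  have hc : η < c := lt_of_le_of_ne (hbc ▸ inf_le_right) hne.2.symm
  exact h.1.not_ge (hbc ▸ le_inf (h.2 b hb) (h.2 c hc))

theorem IsCMIL.infPrime (hdist : ∀ x y z : L, x ⊓ (y ⊔ z) = x ⊓ y ⊔ x ⊓ z) {η p : L}
    (h : IsCMIL η p) : InfPrime η :=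
  letI : DistribLattice L := DistribLattice.ofInfSupLe fun x y z => (hdist x y z).le
  h.infIrred.infPrime

theorem PerspL.separatedBy_iff {η : L} (hη : InfPrime η) {I J : L × L} (h : PerspL I J) :
    SeparatedBy I η ↔ SeparatedBy J η := by
  rcases h with ⟨hlow, hup⟩ | ⟨hlow, hup⟩
  · constructor
    · rintro ⟨hI₁, hI₂⟩
      refine ⟨(hη.2 (hlow ▸ hI₁)).resolve_left hI₂, fun hJ₂ => hI₂ ?_⟩
      exact le_sup_left.trans (hup ▸ hJ₂)
    · rintro ⟨hJ₁, hJ₂⟩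
      exact ⟨hlow ▸ inf_le_right.trans hJ₁, fun hI₂ => hJ₂ (hup ▸ sup_le hI₂ hJ₁)⟩
  · constructor
    · rintro ⟨hI₁, hI₂⟩
      exact ⟨hlow ▸ inf_le_right.trans hI₁, fun hJ₂ => hI₂ (hup ▸ sup_le hJ₂ hI₁)⟩
    · rintro ⟨hJ₁, hJ₂⟩
      refine ⟨(hη.2 (hlow ▸ hJ₁)).resolve_left hJ₂, fun hI₂ => hJ₂ ?_⟩
      exact le_sup_left.trans (hup ▸ hI₂)

theorem ProjectiveL.separatedBy_iff {η : L} (hη : InfPrime η) {I J : L × L}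
    (h : ProjectiveL I J) : SeparatedBy I η ↔ SeparatedBy J η := by
  induction h with
  | refl => rfl
  | tail _ hstep ih => exact ih.trans (hstep.separatedBy_iff hη)

theorem IsCMIL.separatedBy {η p : L} (h : IsCMIL η p) : SeparatedBy (η, p) η :=
  ⟨le_rfl, h.1.not_ge⟩

theorem stmt0_general
    (hdist : ∀ x y z : L, x ⊓ (y ⊔ z) = x ⊓ y ⊔ x ⊓ z) :
    ∀ φ ψ : L, PIPL φ ψ → φ = ψ := by
  rintro φ ψ ⟨p, q, hφ, hψ, hproj⟩
  have hψφ : ψ ≤ φ := ((hproj.separatedBy_iff (hφ.infPrime hdist)).1 hφ.separatedBy).1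
  have hφψ : φ ≤ ψ := ((hproj.separatedBy_iff (hψ.infPrime hdist)).2 hψ.separatedBy).1
  exact le_antisymm hφψ hψφ

/-- Proposition 2, (i) ⇒ (ii): in a distributive complete lattice satisfying (MR),
every PIP equivalence class is a singleton. -/
theorem stmt0
    (hMR : ∀ x : L, x = sInf {η | (∃ p, IsCMIL η p) ∧ x ≤ η})
    (hdist : ∀ x y z : L, x ⊓ (y ⊔ z) = x ⊓ y ⊔ x ⊓ z) :
    ∀ φ ψ : L, PIPL φ ψ → φ = ψ :=
  stmt0_general hdist
end

section
/- Let L be a complete modular lattice satisfying (MR) and the decomposition property (D): for all α, β ∈ L and η ∈ Cm with α ⊓ β ≤ η there exist μ₁, μ₂ ∈ (η/∼) ∪ {⊤} such that α ≤ μ₁, β ≤ μ₂ and μ₁ ⊓ μ₂ ≤ η. If every equivalence class of the prime interval projectivity relation on Cm is a singleton, then L is distributive. (This is the implication (ii) ⇒ (i) of Proposition 2 of the paper, proved using Theorem 1 of the paper, whose conclusion is hypothesis (D).) -/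
/-!
When every PIP class is a singleton, the elements `μ₁, μ₂` supplied by (D) for `η ∈ Cm` lie in
`{η, ⊤}`, and they cannot both be `⊤` because `η < η⁺`. So every completely meet irreducible
element is meet-prime, and by (MR) every element is a meet of meet-prime elements; a lattice
with this property is distributive.
-/

variable {L : Type*} [CompleteLattice L]

theorem inf_sup_le_of_eq_sInf_infPrime {P : L → Prop} (hP : ∀ η, P η → InfPrime η)
    (h : ∀ x : L, x = sInf {η | P η ∧ x ≤ η}) (x y z : L) :
    x ⊓ (y ⊔ z) ≤ x ⊓ y ⊔ x ⊓ z := by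
  rw [h (x ⊓ y ⊔ x ⊓ z)]
  refine le_sInf ?_
  rintro η ⟨hη, hle⟩
  have hprime := hP η hη
  rcases hprime.2 (le_sup_left.trans hle) with hx | hy
  · exact inf_le_left.trans hx
  rcases hprime.2 (le_sup_right.trans hle) with hx | hz
  · exact inf_le_left.trans hx
  · exact inf_le_right.trans (sup_le hy hz)

theorem IsCMIL.infPrime_s1
    (hD : ∀ α β η p : L, IsCMIL η p → α ⊓ β ≤ η →
      ∃ μ₁ μ₂ : L, (μ₁ = ⊤ ∨ PIPL μ₁ η) ∧ (μ₂ = ⊤ ∨ PIPL μ₂ η) ∧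
        α ≤ μ₁ ∧ β ≤ μ₂ ∧ μ₁ ⊓ μ₂ ≤ η)
    (hsing : ∀ φ ψ : L, PIPL φ ψ → φ = ψ) {η p : L} (hp : IsCMIL η p) :
    InfPrime η := by
  refine ⟨hp.1.not_isMax, fun a b hab => ?_⟩
  obtain ⟨μ₁, μ₂, hμ₁, hμ₂, haμ, hbμ, hμη⟩ := hD a b η p hp hab
  rcases hμ₁ with rfl | hμ₁
  · rcases hμ₂ with rfl | hμ₂
    · exact (hp.1.ne_top (top_le_iff.mp (by simpa using hμη))).elim
    · exact Or.inr (hsing _ _ hμ₂ ▸ hbμ)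
  · exact Or.inl (hsing _ _ hμ₁ ▸ haμ)

theorem stmt1_general
    (hMR : ∀ x : L, x = sInf {η | (∃ p, IsCMIL η p) ∧ x ≤ η})
    (hD : ∀ α β η p : L, IsCMIL η p → α ⊓ β ≤ η →
      ∃ μ₁ μ₂ : L, (μ₁ = ⊤ ∨ PIPL μ₁ η) ∧ (μ₂ = ⊤ ∨ PIPL μ₂ η) ∧
        α ≤ μ₁ ∧ β ≤ μ₂ ∧ μ₁ ⊓ μ₂ ≤ η)
    (hsing : ∀ φ ψ : L, PIPL φ ψ → φ = ψ) :
    ∀ x y z : L, x ⊓ (y ⊔ z) = x ⊓ y ⊔ x ⊓ z := by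
  have hprime : ∀ η : L, (∃ p, IsCMIL η p) → InfPrime η :=
    fun _ ⟨_, hp⟩ => hp.infPrime_s1 hD hsing
  exact fun x y z => (inf_sup_le_of_eq_sInf_infPrime hprime hMR x y z).antisymm le_inf_sup

/-- Proposition 2, (ii) ⇒ (i): a complete modular lattice satisfying (MR) and the
decomposition property (D) in which every PIP class is a singleton is distributive. -/
theorem stmt1
    (hmod : ∀ x y z : L, x ≤ z → x ⊔ y ⊓ z = (x ⊔ y) ⊓ z)
    (hMR : ∀ x : L, x = sInf {η | (∃ p, IsCMIL η p) ∧ x ≤ η})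
    (hD : ∀ α β η p : L, IsCMIL η p → α ⊓ β ≤ η →
      ∃ μ₁ μ₂ : L, (μ₁ = ⊤ ∨ PIPL μ₁ η) ∧ (μ₂ = ⊤ ∨ PIPL μ₂ η) ∧
        α ≤ μ₁ ∧ β ≤ μ₂ ∧ μ₁ ⊓ μ₂ ≤ η)
    (hsing : ∀ φ ψ : L, PIPL φ ψ → φ = ψ) :
    ∀ x y z : L, x ⊓ (y ⊔ z) = x ⊓ y ⊔ x ⊓ z :=
  stmt1_general hMR hD hsing
end

section
/- Let L be a complete modular lattice satisfying (MR), and let α₁, β₁, α₂, β₂, α₃, β₃ ∈ L be such that β₂ covers α₂ and I[α₁,β₁] ↗ I[α₂,β₂] ↘ I[α₃,β₃]. Then there exists μ ∈ Cm such that I[α₁,β₁] ↗ I[μ,μ⁺] ↘ I[α₃,β₃]; in particular, any μ ∈ Cm with μ ≥ α₂ and μ ≱ β₂ has this property. (This is the observation proved in Section 2 of the paper which allows every projectivity chain between prime intervals to be rewritten so that all intermediate upper intervals are of the form I[μ,μ⁺] with μ completely meet irreducible.) -/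
variable {L : Type*} [CompleteLattice L]

/-!
Since `α₂ ⋖ β₂`, every `μ ≥ α₂` with `μ ≱ β₂` meets `β₂` exactly in `α₂`, so
`I[α₂,β₂] ↗ I[μ, β₂ ⊔ μ]`; by modularity `β₂ ⊔ μ` covers `μ`, hence is the unique cover `μ⁺`.
Up-transpositions compose, so `I[α₁,β₁]` and `I[α₃,β₃]` both transpose up to `I[μ,μ⁺]`.
Such a `μ` exists by (MR): otherwise every completely meet irreducible element above `α₂`
lies above `β₂`, forcing `β₂ ≤ α₂`.
-/

section Lattice

variable {α : Type*} [Lattice α] {a b c d e f : α}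

/-- `I[a,b] ↗ I[c,d]`. -/
def TransposesUp (a b c d : α) : Prop := a = b ⊓ c ∧ d = b ⊔ c

theorem TransposesUp.trans (h₁ : TransposesUp a b c d) (h₂ : TransposesUp c d e f) :
    TransposesUp a b e f := by
  obtain ⟨rfl, rfl⟩ := h₁
  obtain ⟨hc, rfl⟩ := h₂
  have hce : c ≤ e := hc ▸ inf_le_right
  constructor
  · refine le_antisymm (inf_le_inf_left b hce) (le_inf inf_le_left ?_)
    calc b ⊓ e ≤ (b ⊔ c) ⊓ e := inf_le_inf_right e le_sup_left
      _ = c := hc.symm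
  · rw [sup_assoc, sup_eq_right.mpr hce]

theorem CovBy.inf_eq_of_le_of_not_le (h : a ⋖ b) (hac : a ≤ c) (hbc : ¬b ≤ c) : b ⊓ c = a :=
  (h.eq_or_eq (le_inf h.le hac) inf_le_left).resolve_right fun hb => hbc (hb ▸ inf_le_right)

theorem CovBy.transposesUp_sup (h : a ⋖ b) (hac : a ≤ c) (hbc : ¬b ≤ c) :
    TransposesUp a b c (b ⊔ c) :=
  ⟨(h.inf_eq_of_le_of_not_le hac hbc).symm, rfl⟩

theorem CovBy.covBy_sup_of_le_of_not_le [IsModularLattice α] (h : a ⋖ b) (hac : a ≤ c)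
    (hbc : ¬b ≤ c) : c ⋖ b ⊔ c :=
  covBy_sup_of_inf_covBy_left (h.inf_eq_of_le_of_not_le hac hbc ▸ h)

end Lattice

variable {a b μ p q : L}

theorem IsCMIL.eq_of_covBy (hμ : IsCMIL μ p) (h : μ ⋖ q) : p = q :=
  (h.eq_or_eq hμ.1.le (hμ.2 q h.lt)).resolve_left hμ.1.ne'

theorem IsCMIL.transposesUp_of_covBy [IsModularLattice L] (hμ : IsCMIL μ p) (h : a ⋖ b)
    (haμ : a ≤ μ) (hbμ : ¬b ≤ μ) : TransposesUp a b μ p :=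
  hμ.eq_of_covBy (h.covBy_sup_of_le_of_not_le haμ hbμ) ▸ h.transposesUp_sup haμ hbμ

theorem exists_isCMIL_le_not_le (hMR : ∀ x : L, x = sInf {η | (∃ p, IsCMIL η p) ∧ x ≤ η})
    (h : ¬b ≤ a) : ∃ μ p, IsCMIL μ p ∧ a ≤ μ ∧ ¬b ≤ μ := by
  by_contra! hall
  exact h (hMR a ▸ le_sInf fun η ⟨⟨p, hp⟩, haη⟩ => hall η p hp haη)

/-- The observation of Section 2: if `I[α₁,β₁] ↗ I[α₂,β₂] ↘ I[α₃,β₃]` with `I[α₂,β₂]`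
prime, then there is a completely meet irreducible `μ` with
`I[α₁,β₁] ↗ I[μ,μ⁺] ↘ I[α₃,β₃]`; in particular any `μ ∈ Cm` with `μ ≥ α₂`, `μ ≱ β₂`
works. -/
theorem stmt2
    (hmod : ∀ x y z : L, x ≤ z → x ⊔ y ⊓ z = (x ⊔ y) ⊓ z)
    (hMR : ∀ x : L, x = sInf {η | (∃ p, IsCMIL η p) ∧ x ≤ η})
    (α₁ β₁ α₂ β₂ α₃ β₃ : L) (hcov : α₂ ⋖ β₂)
    (hup : α₁ = β₁ ⊓ α₂ ∧ β₂ = β₁ ⊔ α₂)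
    (hdn : α₃ = β₃ ⊓ α₂ ∧ β₂ = β₃ ⊔ α₂) :
    (∀ μ p : L, IsCMIL μ p → α₂ ≤ μ → ¬ β₂ ≤ μ →
      (α₁ = β₁ ⊓ μ ∧ p = β₁ ⊔ μ) ∧ (α₃ = β₃ ⊓ μ ∧ p = β₃ ⊔ μ)) ∧
    ∃ μ p : L, IsCMIL μ p ∧
      (α₁ = β₁ ⊓ μ ∧ p = β₁ ⊔ μ) ∧ (α₃ = β₃ ⊓ μ ∧ p = β₃ ⊔ μ) := by
  have : IsModularLattice L := ⟨fun {_} y {_} hxz => (hmod _ y _ hxz).ge⟩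
  have through_cmi : ∀ μ p : L, IsCMIL μ p → α₂ ≤ μ → ¬ β₂ ≤ μ →
      TransposesUp α₁ β₁ μ p ∧ TransposesUp α₃ β₃ μ p := fun μ p hμ haμ hbμ =>
    have h := hμ.transposesUp_of_covBy hcov haμ hbμ
    ⟨TransposesUp.trans hup h, TransposesUp.trans hdn h⟩
  obtain ⟨μ, p, hμ, haμ, hbμ⟩ := exists_isCMIL_le_not_le hMR hcov.lt.not_ge
  exact ⟨through_cmi, μ, p, hμ, through_cmi μ p hμ haμ hbμ⟩
end

section
/- Let L be a complete modular lattice satisfying (MR) and condition (P): φ ∼ ψ implies φ⁺ = ψ⁺ for all φ, ψ ∈ Cm. Then for all φ, ψ ∈ Cm with φ ∼ ψ there exist α, β ∈ L such that I[φ,φ⁺] ↘ I[α,β] ↗ I[ψ,ψ⁺], i.e., φ ⊓ β = α = ψ ⊓ β and φ ⊔ β = φ⁺ and ψ ⊔ β = ψ⁺. (This is Lemma 6 of the paper: under (SC1), which yields condition (P), projectivity of prime intervals over completely meet irreducible congruences can always be realized by a single down–up transposition.) -/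
/-!
By (P) both prime intervals have the same top `p`. Along the chain of transpositions from
`I[φ,p]`, every interval `I[x,y]` is prime, lies below `p`, and transposes up to some `I[η,p]`
with `η ⋖ p` and `I[φ,p] ↘ I[φ ⊓ β, β] ↗ I[η,p]`. A down-step keeps `η`. After an up-step, (MR)
provides a completely meet irreducible `θ` above the new bottom but not above the new top; (P)
forces the cover of `θ` to be `p`, and the old interval links `η` to `θ` by a down-up step.

So everything rests on the transitivity of the down-up relation among the elements covered by
`p`. Read dually as points of a modular geometry, two distinct such elements are related iff
their line `a ⊓ b` carries a third point. If `m` is a third point on the line `ab` and `n` one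
on `bc`, with `a, b, c` not collinear, then `β = m ⊓ n` links `a` and `c`.
-/

variable {L : Type*} [CompleteLattice L]

section Lattice

variable {α : Type*}

theorem CovBy.eq_of_le_of_covBy [PartialOrder α] {a b p : α} (ha : a ⋖ p) (hb : b ⋖ p)
    (h : a ≤ b) : a = b :=
  ((ha.eq_or_eq h hb.le).resolve_right hb.ne).symm

variable [Lattice α] {p a b c m n x y β : α}

theorem CovBy.sup_eq_of_not_le (ha : a ⋖ p) (hb : b ≤ p) (h : ¬ b ≤ a) : a ⊔ b = p :=
  (ha.eq_or_eq le_sup_left (sup_le ha.le hb)).resolve_left fun h' =>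
    h (le_sup_right.trans_eq h')

theorem CovBy.inf_eq_of_le_of_not_le_s3 (hxy : x ⋖ y) (hx : x ≤ a) (hy : ¬ y ≤ a) : y ⊓ a = x :=
  (hxy.eq_or_eq (le_inf hxy.le hx) inf_le_left).resolve_right fun h => hy (h.ge.trans inf_le_right)

/-- `I[a,p] ↘ I[a ⊓ β, β] ↗ I[b,p]` for some `β`. -/
def DownUpPersp (p a b : α) : Prop :=
  ∃ β, a ⊓ β = b ⊓ β ∧ a ⊔ β = p ∧ b ⊔ β = p

theorem DownUpPersp.refl (h : a ≤ p) : DownUpPersp p a a :=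
  ⟨p, rfl, sup_eq_right.2 h, sup_eq_right.2 h⟩

theorem downUpPersp_of_inf_le (ha : a ⋖ p) (hb : b ⋖ p) (hβ : β ≤ p) (hab : β ⊓ a ≤ b)
    (hba : β ⊓ b ≤ a) (ha' : ¬ β ≤ a) (hb' : ¬ β ≤ b) : DownUpPersp p a b :=
  ⟨β, le_antisymm (le_inf ((inf_comm a β).trans_le hab) inf_le_right)
      (le_inf ((inf_comm b β).trans_le hba) inf_le_right),
    ha.sup_eq_of_not_le hβ ha', hb.sup_eq_of_not_le hβ hb'⟩

theorem downUpPersp_of_covBy (ha : a ⋖ p) (hb : b ⋖ p) (hxy : x ⋖ y) (hyp : y ≤ p)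
    (hxa : x ≤ a) (hya : ¬ y ≤ a) (hxb : x ≤ b) (hyb : ¬ y ≤ b) : DownUpPersp p a b :=
  downUpPersp_of_inf_le ha hb hyp ((hxy.inf_eq_of_le_of_not_le_s3 hxa hya).trans_le hxb)
    ((hxy.inf_eq_of_le_of_not_le_s3 hxb hyb).trans_le hxa) hya hyb

section LowerModular

variable [IsLowerModularLattice α]

theorem inf_covBy_of_covBy_of_ne (ha : a ⋖ p) (hb : b ⋖ p) (hab : a ≠ b) : a ⊓ b ⋖ a :=
  inf_covBy_of_covBy_sup_right (by rwa [ha.wcovBy.sup_eq hb.wcovBy hab])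

theorem inf_wcovBy_of_covBy (ha : a ⋖ p) (hb : b ⋖ p) : a ⊓ b ⩿ b := by
  rcases eq_or_ne a b with rfl | hab
  · rw [inf_idem]
    exact .refl a
  · rw [inf_comm]
    exact (inf_covBy_of_covBy_of_ne hb ha hab.symm).wcovBy

theorem inf_eq_inf_of_inf_le (ha : a ⋖ p) (hb : b ⋖ p) (hc : c ⋖ p) (hab : a ≠ b) (hac : a ≠ c)
    (h : a ⊓ b ≤ c) : a ⊓ b = a ⊓ c :=
  (((inf_covBy_of_covBy_of_ne ha hb hab).eq_or_eq (le_inf inf_le_left h) inf_le_left)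
    |>.resolve_right fun h' => hac (ha.eq_of_le_of_covBy hc (h'.ge.trans inf_le_right))).symm

theorem inf_inf_le_and_not_inf_le (ha : a ⋖ p) (hb : b ⋖ p) (hc : c ⋖ p) (hm : m ⋖ p)
    (hn : n ⋖ p) (hac : a ≠ c) (hbc : b ≠ c) (habc : ¬ a ⊓ c ≤ b) (hma : m ⊓ a ≤ b)
    (hnb : n ⊓ b = b ⊓ c) : m ⊓ n ⊓ a ≤ c ∧ ¬ m ⊓ n ≤ a := by
  have hmna : m ⊓ n ⊓ a ≤ b ⊓ c :=
    hnb ▸ le_inf (inf_le_left.trans inf_le_right) ((inf_le_inf_right a inf_le_left).trans hma)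
  refine ⟨hmna.trans inf_le_right, fun h => ?_⟩
  have hlt : m ⊓ n < b ⊓ c := by
    refine lt_of_le_of_ne ((le_inf le_rfl h).trans hmna) fun h' => habc ?_
    have hcb : c ⊓ b = c ⊓ a :=
      inf_eq_inf_of_inf_le hc hb ha hbc.symm hac.symm ((inf_comm c b).trans_le (h' ▸ h))
    rw [inf_comm, ← hcb]
    exact inf_le_right
  have hgt : b ⊓ c < n := by
    refine lt_of_le_of_ne (hnb ▸ inf_le_left) fun h' => hbc ?_
    have hnb' : n = b := hn.eq_of_le_of_covBy hb (h' ▸ inf_le_left)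
    exact hb.eq_of_le_of_covBy hc (inf_eq_left.1 (h'.trans hnb'))
  exact (inf_wcovBy_of_covBy hm hn).2 hlt hgt

end LowerModular

section Modular

variable [IsModularLattice α]

theorem DownUpPersp.exists_covBy (ha : a ⋖ p) (hb : b ⋖ p) (hab : a ≠ b)
    (h : DownUpPersp p a b) : ∃ m, m ⋖ p ∧ m ⊓ a = a ⊓ b ∧ m ⊓ b = a ⊓ b := by
  obtain ⟨β, hβ, -, hbβ⟩ := h
  have hβab : β ⊓ a = β ⊓ b := by rw [inf_comm, hβ, inf_comm]
  have hβa : β ⊓ a ≤ a ⊓ b := le_inf inf_le_right (hβab ▸ inf_le_right)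
  have hma : (a ⊓ b ⊔ β) ⊓ a = a ⊓ b := by
    rw [sup_inf_assoc_of_le β inf_le_left, sup_eq_left.2 hβa]
  have hmb : (a ⊓ b ⊔ β) ⊓ b = a ⊓ b := by
    rw [sup_inf_assoc_of_le β inf_le_right, ← hβab, sup_eq_left.2 hβa]
  have hmp : a ⊓ b ⊔ β ⊔ b = p := by
    rw [sup_assoc, sup_comm β, hbβ, sup_eq_right.2 (inf_le_left.trans ha.le)]
  refine ⟨_, hmp ▸ covBy_sup_of_inf_covBy_right ?_, hma, hmb⟩
  rw [hmb, inf_comm]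
  exact inf_covBy_of_covBy_of_ne hb ha hab.symm

theorem DownUpPersp.trans (ha : a ⋖ p) (hb : b ⋖ p) (hc : c ⋖ p) (hab : DownUpPersp p a b)
    (hbc : DownUpPersp p b c) : DownUpPersp p a c := by
  rcases eq_or_ne a b with rfl | hab'
  · exact hbc
  rcases eq_or_ne b c with rfl | hbc'
  · exact hab
  rcases eq_or_ne a c with rfl | hac
  · exact .refl ha.le
  by_cases habc : a ⊓ c ≤ b
  · refine downUpPersp_of_inf_le ha hc hb.le ?_ ?_
      (fun h => hab' (hb.eq_of_le_of_covBy ha h).symm) (fun h => hbc' (hb.eq_of_le_of_covBy hc h))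
    · rw [inf_comm, ← inf_eq_inf_of_inf_le ha hc hb hac hab' habc]
      exact inf_le_right
    · rw [inf_comm, ← inf_eq_inf_of_inf_le hc ha hb hac.symm hbc'.symm (inf_comm c a ▸ habc)]
      exact inf_le_right
  · obtain ⟨m, hm, hma, hmb⟩ := hab.exists_covBy ha hb hab'
    obtain ⟨n, hn, hnb, hnc⟩ := hbc.exists_covBy hb hc hbc'
    obtain ⟨hmna, hmn_a⟩ := inf_inf_le_and_not_inf_le ha hb hc hm hn hac hbc' habc
      (hma.trans_le inf_le_right) hnb
    obtain ⟨hnmc, hnm_c⟩ := inf_inf_le_and_not_inf_le hc hb ha hn hm hac.symm hab'.symm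
      (by rwa [inf_comm]) (hnc.trans_le inf_le_left) (hmb.trans (inf_comm a b))
    rw [inf_comm n m] at hnmc hnm_c
    exact downUpPersp_of_inf_le ha hc (inf_le_left.trans hm.le) hmna hnmc hmn_a hnm_c

end Modular

end Lattice

theorem IsCMIL.covBy {η p : L} (h : IsCMIL η p) : η ⋖ p :=
  ⟨h.1, fun _ h1 h2 => h2.not_ge (h.2 _ h1)⟩

theorem exists_isCMIL_of_not_le (hMR : ∀ x : L, x = sInf {η | (∃ p, IsCMIL η p) ∧ x ≤ η})
    {x y : L} (h : ¬ y ≤ x) : ∃ η q, IsCMIL η q ∧ x ≤ η ∧ ¬ y ≤ η := by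
  by_contra! hc
  refine h ((le_sInf ?_).trans_eq (hMR x).symm)
  rintro η ⟨⟨q, hq⟩, hxη⟩
  exact hc η q hq hxη

theorem IsCMIL.inf_eq_and_sup_eq_of_covBy [IsUpperModularLattice L] {θ q x y : L}
    (hθ : IsCMIL θ q) (hxy : x ⋖ y) (hx : x ≤ θ) (hy : ¬ y ≤ θ) : y ⊓ θ = x ∧ y ⊔ θ = q := by
  have hinf := hxy.inf_eq_of_le_of_not_le_s3 hx hy
  have hcov : θ ⋖ y ⊔ θ := covBy_sup_of_inf_covBy_left (hinf ▸ hxy)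
  exact ⟨hinf, ((hcov.eq_or_eq hθ.1.le (hθ.2 _ hcov.lt)).resolve_left hθ.1.ne').symm⟩

theorem exists_downUpPersp_of_projectiveL [IsModularLattice L]
    (hMR : ∀ x : L, x = sInf {η | (∃ p, IsCMIL η p) ∧ x ≤ η}) {φ p : L}
    (hφ : IsCMIL φ p) (hP : ∀ θ q, IsCMIL θ q → ProjectiveL (φ, p) (θ, q) → p = q) {z : L × L}
    (h : ProjectiveL (φ, p) z) :
    z.1 ⋖ z.2 ∧ z.2 ≤ p ∧ ∃ η, η ⋖ p ∧ z.1 ≤ η ∧ ¬ z.2 ≤ η ∧ DownUpPersp p φ η := by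
  have hφp : φ ⋖ p := hφ.covBy
  induction h with
  | refl => exact ⟨hφp, le_rfl, φ, hφp, le_rfl, hφp.lt.not_ge, .refl hφp.le⟩
  | @tail xy xy' hpath hstep ih =>
    obtain ⟨x, y⟩ := xy
    obtain ⟨x', y'⟩ := xy'
    dsimp only at ih ⊢
    obtain ⟨hxy, hyp, η, hη, hxη, hyη, hφη⟩ := ih
    have hpath' : ProjectiveL (φ, p) (x', y') := hpath.tail hstep
    rcases hstep with hup | hdown
    · obtain ⟨hx, hy'⟩ : x = y ⊓ x' ∧ y' = y ⊔ x' := hup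
      have hx'y' : x' ⋖ y' := hy' ▸ covBy_sup_of_inf_covBy_left (hx ▸ hxy)
      obtain ⟨θ, q, hθ, hx'θ, hy'θ⟩ := exists_isCMIL_of_not_le hMR hx'y'.lt.not_ge
      obtain ⟨hθinf, hθsup⟩ := hθ.inf_eq_and_sup_eq_of_covBy hx'y' hx'θ hy'θ
      obtain rfl : p = q := hP θ q hθ (hpath'.tail (.inl ⟨hθinf.symm, hθsup.symm⟩))
      have hxθ : x ≤ θ := hx ▸ inf_le_right.trans hx'θ
      have hyθ : ¬ y ≤ θ := fun h => hy'θ (hy' ▸ sup_le h hx'θ)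
      have hηθ : DownUpPersp p η θ := downUpPersp_of_covBy hη hθ.covBy hxy hyp hxη hyη hxθ hyθ
      exact ⟨hx'y', hθsup ▸ le_sup_left, θ, hθ.covBy, hx'θ, hy'θ,
        hφη.trans hφp hη hθ.covBy hηθ⟩
    · obtain ⟨hx', hy⟩ : x' = y' ⊓ x ∧ y = y' ⊔ x := hdown
      refine ⟨hx' ▸ inf_covBy_of_covBy_sup_right (hy ▸ hxy), (hy ▸ le_sup_left).trans hyp,
        η, hη, hx' ▸ inf_le_right.trans hxη, fun h => hyη (hy ▸ sup_le h hxη), hφη⟩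

/-- Lemma 6: in a complete modular lattice with (MR) and (P), projectivity of prime
intervals over completely meet irreducible elements is realized by a single
down-up transposition. -/
theorem stmt3
    (hmod : ∀ x y z : L, x ≤ z → x ⊔ y ⊓ z = (x ⊔ y) ⊓ z)
    (hMR : ∀ x : L, x = sInf {η | (∃ p, IsCMIL η p) ∧ x ≤ η})
    (hP : ∀ φ ψ p q : L, IsCMIL φ p → IsCMIL ψ q → ProjectiveL (φ, p) (ψ, q) → p = q) :
    ∀ φ ψ p q : L, IsCMIL φ p → IsCMIL ψ q → ProjectiveL (φ, p) (ψ, q) →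
      ∃ α β : L, φ ⊓ β = α ∧ ψ ⊓ β = α ∧ φ ⊔ β = p ∧ ψ ⊔ β = q := by
  intro φ ψ p q hφ hψ hproj
  have : IsModularLattice L := ⟨fun {x} y {z} h => (hmod x y z h).ge⟩
  obtain rfl := hP φ ψ p q hφ hψ hproj
  obtain ⟨-, -, η, hη, hψη, -, β, hβ, hφβ, hηβ⟩ :=
    exists_downUpPersp_of_projectiveL hMR hφ (fun θ q hθ => hP φ θ p q hφ hθ) hproj
  obtain rfl := hψ.covBy.eq_of_le_of_covBy hη hψη
  exact ⟨φ ⊓ β, β, rfl, hβ.symm, hφβ, hηβ⟩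
end

section
/- Condition (O) holds if and only if for every φ ∈ Cm and all a, b ∈ A: (a,b) ∈ φ⁺ implies that (a,b) ∈ φ or (1,a) ∈ φ or (1,b) ∈ φ. (This is Proposition 8 of the paper, characterizing when all quotients of an algebra are congruence orderable.) -/
/-
An equivalence `φ ∈ C` that is maximal among the members of `C` avoiding a pair `(a, b)` is
completely meet irreducible with cover `φ ⊔ Θ(a,b)`, and by Zorn's lemma (directed unions stay
in `C`) every `α ∈ C` avoiding `(a, b)` lies below such a `φ`. Since `(a, b) ∈ α` always gives
`α ⊔ Θ(1,a) = α ⊔ Θ(1,b)`, condition (O) fails exactly when some such `φ` has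
`φ ⊔ Θ(1,a) = φ ⊔ Θ(1,b)`, i.e. when neither `(1,a)` nor `(1,b)` lies in `φ`;
conversely a completely meet irreducible `φ` violating the condition satisfies this equation,
because both joins contain the cover `φ⁺ ∋ (a, b)`.
-/

variable {A : Type*}

/-- `η` is a completely meet irreducible member of `C`, with (unique) cover `p` in `C`. -/
def IsCMI (C : Set (Setoid A)) (η p : Setoid A) : Prop :=
  η ∈ C ∧ p ∈ C ∧ η < p ∧ ∀ β ∈ C, η < β → p ≤ β

/-- A single up or down transposition between the intervals `I[pq.1, pq.2]`
and `I[rs.1, rs.2]` of `C`. -/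
def Persp (C : Set (Setoid A)) (pq rs : Setoid A × Setoid A) : Prop :=
  pq.1 ∈ C ∧ pq.2 ∈ C ∧ rs.1 ∈ C ∧ rs.2 ∈ C ∧
    ((pq.1 = pq.2 ⊓ rs.1 ∧ rs.2 = pq.2 ⊔ rs.1) ∨
      (rs.1 = rs.2 ⊓ pq.1 ∧ pq.2 = rs.2 ⊔ pq.1))

/-- Projectivity of intervals of `C`: a finite chain of up and down transpositions. -/
def Projective (C : Set (Setoid A)) : Setoid A × Setoid A → Setoid A × Setoid A → Prop :=
  Relation.ReflTransGen (Persp C)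

/-- Prime interval projectivity `φ ∼ ψ`: the prime intervals `I[φ,φ⁺]` and `I[ψ,ψ⁺]`
over completely meet irreducible members of `C` are projective. -/
def PIP (C : Set (Setoid A)) (φ ψ : Setoid A) : Prop :=
  ∃ p q, IsCMI C φ p ∧ IsCMI C ψ q ∧ Projective C (φ, p) (ψ, q)

/-- `Θ(a,b)`: the least member of `C` containing the pair `(a, b)`. -/
def theta (C : Set (Setoid A)) (a b : A) : Setoid A :=
  sInf {s | s ∈ C ∧ s.r a b}

/-- The relation `φ • ψ`: the pairs of `p = φ⁺ = ψ⁺` on which `φ` and `ψ` agree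
(the complement of the symmetric difference of `φ` and `ψ` intersected with `p`). -/
def Bul (p φ ψ : Setoid A) (x y : A) : Prop :=
  p.r x y ∧ (φ.r x y ↔ ψ.r x y)

section

variable {C : Set (Setoid A)}

lemma theta_rel (a b : A) : (theta C a b).r a b :=
  fun _ hs => hs.2

lemma theta_mem (hInf : ∀ S ⊆ C, sInf S ∈ C) (a b : A) : theta C a b ∈ C :=
  hInf _ fun _ hs => hs.1

lemma theta_le_iff {γ : Setoid A} (hγ : γ ∈ C) {a b : A} : theta C a b ≤ γ ↔ γ.r a b :=
  ⟨fun h => h (theta_rel a b), fun h => sInf_le ⟨hγ, h⟩⟩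

lemma sup_theta_le_iff {α γ : Setoid A} (hγ : γ ∈ C) {a b : A} :
    α ⊔ theta C a b ≤ γ ↔ α ≤ γ ∧ γ.r a b := by
  rw [sup_le_iff, theta_le_iff hγ]

lemma sup_mem (hSup : ∀ S ⊆ C, sSup S ∈ C) {α β : Setoid A} (hα : α ∈ C) (hβ : β ∈ C) :
    α ⊔ β ∈ C := by
  rw [← sSup_pair]
  exact hSup _ (by rintro s (rfl | rfl) <;> assumption)

lemma sup_theta_le_sup_theta (hInf : ∀ S ⊆ C, sInf S ∈ C) (hSup : ∀ S ⊆ C, sSup S ∈ C)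
    {α : Setoid A} (hα : α ∈ C) {one c d : A} (hcd : (α ⊔ theta C one d).r c d) :
    α ⊔ theta C one c ≤ α ⊔ theta C one d := by
  rw [sup_theta_le_iff (sup_mem hSup hα (theta_mem hInf one d))]
  exact ⟨le_sup_left, Setoid.trans' _ (le_sup_right (a := α) (theta_rel one d))
    (Setoid.symm' _ hcd)⟩

lemma sup_theta_eq_of_rel (hInf : ∀ S ⊆ C, sInf S ∈ C) (hSup : ∀ S ⊆ C, sSup S ∈ C)
    {α : Setoid A} (hα : α ∈ C) (one : A) {a b : A} (hab : α.r a b) :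
    α ⊔ theta C one a = α ⊔ theta C one b :=
  le_antisymm (sup_theta_le_sup_theta hInf hSup hα (le_sup_left (b := theta C one b) hab))
    (sup_theta_le_sup_theta hInf hSup hα (le_sup_left (b := theta C one a) (α.symm' hab)))

lemma rel_of_sup_theta_eq {α φ : Setoid A} (hφ : φ ∈ C) (hαφ : α ≤ φ) {one a b : A}
    (heq : α ⊔ theta C one a = α ⊔ theta C one b) (ha : φ.r one a) : φ.r one b :=
  ((sup_theta_le_iff hφ).mp (heq ▸ (sup_theta_le_iff hφ).mpr ⟨hαφ, ha⟩)).2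

lemma IsCMI.le_sup_theta (hInf : ∀ S ⊆ C, sInf S ∈ C) (hSup : ∀ S ⊆ C, sSup S ∈ C)
    {φ p : Setoid A} (h : IsCMI C φ p) {one c : A} (hc : ¬ φ.r one c) :
    p ≤ φ ⊔ theta C one c := by
  obtain ⟨hφ, -, -, hcover⟩ := h
  refine hcover _ (sup_mem hSup hφ (theta_mem hInf one c)) (lt_of_le_of_ne le_sup_left ?_)
  intro heq
  exact hc ((sup_theta_le_iff hφ).mp heq.ge).2

lemma exists_le_maximal_not_rel (hSup : ∀ S ⊆ C, sSup S ∈ C)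
    (hDir : ∀ D ⊆ C, D.Nonempty → DirectedOn (· ≤ ·) D →
      ∀ x y : A, (sSup D).r x y ↔ ∃ s ∈ D, s.r x y)
    {α : Setoid A} (hα : α ∈ C) {a b : A} (hab : ¬ α.r a b) :
    ∃ φ, α ≤ φ ∧ Maximal (fun β => β ∈ C ∧ ¬ β.r a b) φ := by
  refine zorn_le_nonempty₀ {β | β ∈ C ∧ ¬ β.r a b} ?_ α ⟨hα, hab⟩
  intro D hD hchain β hβ
  have hDC : D ⊆ C := fun s hs => (hD hs).1
  refine ⟨sSup D, ⟨hSup D hDC, ?_⟩, fun _ => le_sSup⟩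
  rw [hDir D hDC ⟨β, hβ⟩ hchain.directedOn]
  rintro ⟨s, hs, hsab⟩
  exact (hD hs).2 hsab

lemma Maximal.isCMI_sup_theta (hInf : ∀ S ⊆ C, sInf S ∈ C) (hSup : ∀ S ⊆ C, sSup S ∈ C)
    {φ : Setoid A} {a b : A} (hmax : Maximal (fun β => β ∈ C ∧ ¬ β.r a b) φ) :
    IsCMI C φ (φ ⊔ theta C a b) := by
  obtain ⟨hφ, hab⟩ := hmax.1
  refine ⟨hφ, sup_mem hSup hφ (theta_mem hInf a b),
    lt_of_le_of_ne le_sup_left fun heq => hab (heq ▸ le_sup_right (a := φ) (theta_rel a b)), ?_⟩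
  intro β hβ hφβ
  have hβab : β.r a b := by
    by_contra hβab
    exact hφβ.not_ge (hmax.2 ⟨hβ, hβab⟩ hφβ.le)
  exact (sup_theta_le_iff hβ).mpr ⟨hφβ.le, hβab⟩

end

/-- Proposition 8: condition (O) (all quotients congruence orderable) holds iff for
every `φ ∈ Cm` and `a, b ∈ A`, `(a,b) ∈ φ⁺` implies `(a,b) ∈ φ` or `(1,a) ∈ φ` or
`(1,b) ∈ φ`. -/
theorem stmt4 (one : A) (C : Set (Setoid A))
    (hInf : ∀ S ⊆ C, sInf S ∈ C) (hSup : ∀ S ⊆ C, sSup S ∈ C)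
    (hDir : ∀ D ⊆ C, D.Nonempty → DirectedOn (· ≤ ·) D →
      ∀ x y : A, (sSup D).r x y ↔ ∃ s ∈ D, s.r x y) :
    (∀ α ∈ C, ∀ a b : A, α ⊔ theta C one a = α ⊔ theta C one b ↔ α.r a b) ↔
    (∀ φ p : Setoid A, IsCMI C φ p → ∀ a b : A, p.r a b →
      φ.r a b ∨ φ.r one a ∨ φ.r one b) := by
  constructor
  · intro hO φ p hcmi a b hp
    by_contra! ⟨hab, ha, hb⟩
    have hpa := hcmi.le_sup_theta hInf hSup ha
    have hpb := hcmi.le_sup_theta hInf hSup hb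
    have heq : φ ⊔ theta C one a = φ ⊔ theta C one b :=
      le_antisymm (sup_theta_le_sup_theta hInf hSup hcmi.1 (hpb hp))
        (sup_theta_le_sup_theta hInf hSup hcmi.1 (hpa (p.symm' hp)))
    exact hab ((hO φ hcmi.1 a b).mp heq)
  · refine fun hCMI α hα a b => ⟨fun heq => ?_, sup_theta_eq_of_rel hInf hSup hα one⟩
    by_contra hab
    obtain ⟨φ, hαφ, hmax⟩ := exists_le_maximal_not_rel hSup hDir hα hab
    have hφ := hmax.1.1
    rcases hCMI φ _ (hmax.isCMI_sup_theta hInf hSup) a b (le_sup_right (a := φ) (theta_rel a b))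
      with hφab | ha | hb
    · exact hmax.1.2 hφab
    · exact hmax.1.2 (φ.trans' (φ.symm' ha) (rel_of_sup_theta_eq hφ hαφ heq ha))
    · exact hmax.1.2 (φ.trans' (φ.symm' (rel_of_sup_theta_eq hφ hαφ heq.symm hb)) hb)
end

section
/- Assume conditions (M), (O), (R), (P). Let φ, ψ ∈ Cm with φ ≠ ψ and φ⁺ = ψ⁺. Then the following are equivalent: (1) φ ∼ ψ; (2) the relation φ • ψ is a member of Cm; (3) the relation φ • ψ is a member of C. (This is Corollary 11 of the paper.) -/
variable {A : Type*}

/-!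
By (O), a completely meet irreducible `θ` with cover `p` is `p` with the `p`-class of `one` cut
into two blocks, the `θ`-class of `one` and the rest. Hence such a `θ` is covered by `p` even among
all equivalence relations, and `φ • ψ` is the relation obtained from `p` by cutting along the
symmetric difference of the `one`-classes, again covered by `p`.

If `σ = φ • ψ` lies in `C`, then `I[φ, p]` transposes down to `I[φ ⊓ ψ, σ]` and up to `I[ψ, p]`.
Conversely, follow a chain of transpositions from `I[φ, p]` to `I[ψ, p]` and attach to each prime
interval `I[χ, π]` of the chain a completely meet irreducible `θ` with `π ⊓ θ = χ`: a maximal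
member above `χ` avoiding a pair of `π`, whose cover is `p` by (P). Along the chain `φ • θ` stays
realized by a completely meet irreducible member of the projectivity class of `I[φ, p]`, using
`(φ • θ) • (θ • θ') = φ • θ'` to compose. The tool for this is that any `X ≤ φ • ψ` in `C`
for which `I[X, p]` is projective to `I[φ, p]` is completely meet irreducible by (P), hence equal
to `φ • ψ`, and `X = φ ⊓ ψ ⊔ W` is such a member whenever `W ≤ φ • ψ` is not below `φ`.
-/

structure IsCongLattice (C : Set (Setoid A)) : Prop where
  sInf_mem : ∀ S ⊆ C, sInf S ∈ C
  sSup_mem : ∀ S ⊆ C, sSup S ∈ C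
  rel_sSup_iff : ∀ D ⊆ C, D.Nonempty → DirectedOn (· ≤ ·) D →
    ∀ x y : A, (sSup D).r x y ↔ ∃ s ∈ D, s.r x y

def CondM (C : Set (Setoid A)) : Prop :=
  ∀ x ∈ C, ∀ y ∈ C, ∀ z ∈ C, x ≤ z → x ⊔ y ⊓ z = (x ⊔ y) ⊓ z

def CondO (one : A) (C : Set (Setoid A)) : Prop :=
  ∀ α ∈ C, ∀ a b : A, α ⊔ theta C one a = α ⊔ theta C one b ↔ α.r a b

def CondP (C : Set (Setoid A)) : Prop :=
  ∀ φ ψ p q : Setoid A, IsCMI C φ p → IsCMI C ψ q → Projective C (φ, p) (ψ, q) → p = q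

/-- `I[a, b]` is a prime interval of `C`. -/
structure CovByIn (C : Set (Setoid A)) (a b : Setoid A) : Prop where
  left_mem : a ∈ C
  right_mem : b ∈ C
  lt : a < b
  eq_or_eq : ∀ γ ∈ C, a ≤ γ → γ ≤ b → γ = a ∨ γ = b

variable {C : Set (Setoid A)}

namespace IsCongLattice

theorem sup_mem (hC : IsCongLattice C) {a b : Setoid A} (ha : a ∈ C) (hb : b ∈ C) :
    a ⊔ b ∈ C := by
  simpa only [sSup_pair] using hC.sSup_mem {a, b} (Set.pair_subset ha hb)

theorem inf_mem (hC : IsCongLattice C) {a b : Setoid A} (ha : a ∈ C) (hb : b ∈ C) :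
    a ⊓ b ∈ C := by
  simpa only [sInf_pair] using hC.sInf_mem {a, b} (Set.pair_subset ha hb)

theorem theta_mem (hC : IsCongLattice C) (a b : A) : theta C a b ∈ C :=
  hC.sInf_mem _ fun _ hs => hs.1

end IsCongLattice

theorem rel_theta (C : Set (Setoid A)) (a b : A) : (theta C a b).r a b :=
  fun _ hs => hs.2

theorem theta_le {s : Setoid A} (hs : s ∈ C) {a b : A} (h : s.r a b) : theta C a b ≤ s :=
  sInf_le ⟨hs, h⟩

namespace IsCMI

variable {θ θ' p : Setoid A}

theorem mem (h : IsCMI C θ p) : θ ∈ C := h.1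

theorem cover_mem (h : IsCMI C θ p) : p ∈ C := h.2.1

theorem lt (h : IsCMI C θ p) : θ < p := h.2.2.1

theorem cover_le (h : IsCMI C θ p) {β : Setoid A} (hβ : β ∈ C) (hθβ : θ < β) : p ≤ β :=
  h.2.2.2 β hβ hθβ

theorem covByIn (h : IsCMI C θ p) : CovByIn C θ p := by
  refine ⟨h.mem, h.cover_mem, h.lt, fun γ hγ hθγ hγp => ?_⟩
  rcases hθγ.eq_or_lt with rfl | hlt
  · exact Or.inl rfl
  · exact Or.inr (hγp.antisymm (h.cover_le hγ hlt))

theorem cover_eq (h : IsCMI C θ p) {q : Setoid A} (hq : CovByIn C θ q) : p = q := by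
  rcases hq.eq_or_eq p h.cover_mem h.lt.le (h.cover_le hq.right_mem hq.lt) with hp | hp
  · exact absurd hp h.lt.ne'
  · exact hp

theorem eq_of_le (h : IsCMI C θ p) (h' : IsCMI C θ' p) (hle : θ ≤ θ') : θ = θ' := by
  by_contra hne
  exact h'.lt.not_ge (h.cover_le h'.mem (hle.lt_of_ne hne))

end IsCMI

theorem CovByIn.sup_right (hC : IsCongLattice C) (hM : CondM C) {a b c : Setoid A}
    (h : CovByIn C a b) (hc : c ∈ C) (hbc : b ⊓ c = a) : CovByIn C c (b ⊔ c) := by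
  have hac : a ≤ c := hbc ▸ inf_le_right
  refine ⟨hc, hC.sup_mem h.right_mem hc, lt_of_le_of_ne le_sup_right fun hcb => ?_, ?_⟩
  · exact h.lt.ne (hbc ▸ inf_eq_left.mpr (hcb ▸ le_sup_left))
  · intro γ hγ hcγ hγbc
    have hγ' : c ⊔ b ⊓ γ = γ := by
      rw [hM c hc b h.right_mem γ hγ hcγ, sup_comm, inf_eq_right.mpr hγbc]
    rcases h.eq_or_eq (b ⊓ γ) (hC.inf_mem h.right_mem hγ)
      (hbc ▸ inf_le_inf_left b hcγ) inf_le_left with hbγ | hbγ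
    · left
      rw [← hγ', hbγ, sup_eq_left.mpr hac]
    · exact Or.inr (hγbc.antisymm (sup_le (inf_eq_left.mp hbγ) hcγ))

theorem CovByIn.inf_left (hC : IsCongLattice C) (hM : CondM C) {b c d : Setoid A}
    (h : CovByIn C c d) (hb : b ∈ C) (hbc : b ⊔ c = d) : CovByIn C (b ⊓ c) b := by
  refine ⟨hC.inf_mem hb h.left_mem, hb, lt_of_le_of_ne inf_le_left fun hbc' => ?_, ?_⟩
  · exact h.lt.ne (hbc ▸ (sup_eq_right.mpr (inf_eq_left.mp hbc')).symm)
  · intro γ hγ hγbc hγb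
    have hγ' : (γ ⊔ c) ⊓ b = γ := by
      rw [← hM γ hγ c h.left_mem b hb hγb, inf_comm, sup_eq_left.mpr hγbc]
    rcases h.eq_or_eq (γ ⊔ c) (hC.sup_mem hγ h.left_mem) le_sup_right
      (hbc ▸ sup_le_sup_right hγb c) with hγc | hγc
    · exact Or.inl (hγbc.antisymm' (le_inf hγb (sup_eq_right.mp hγc)))
    · right
      rw [← hγ', hγc, ← hbc, inf_eq_right.mpr le_sup_left]

theorem Persp.covByIn (hC : IsCongLattice C) (hM : CondM C) {I J : Setoid A × Setoid A}
    (hIJ : Persp C I J) (hI : CovByIn C I.1 I.2) : CovByIn C J.1 J.2 := by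
  obtain ⟨-, -, hJ1, hJ2, ⟨hI1, hJ2'⟩ | ⟨hJ1', hI2⟩⟩ := hIJ
  · rw [hJ2']
    exact hI.sup_right hC hM hJ1 hI1.symm
  · rw [hJ1']
    exact hI.inf_left hC hM hJ2 hI2.symm

theorem Projective.covByIn (hC : IsCongLattice C) (hM : CondM C) {I J : Setoid A × Setoid A}
    (hIJ : Projective C I J) (hI : CovByIn C I.1 I.2) : CovByIn C J.1 J.2 := by
  induction hIJ with
  | refl => exact hI
  | tail _ hKJ ih => exact hKJ.covByIn hC hM ih

theorem Persp.symm {I J : Setoid A × Setoid A} (h : Persp C I J) : Persp C J I :=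
  ⟨h.2.2.1, h.2.2.2.1, h.1, h.2.1, h.2.2.2.2.symm⟩

theorem IsCongLattice.exists_isCMI_of_not_rel (hC : IsCongLattice C) {ρ : Setoid A}
    (hρ : ρ ∈ C) {c d : A} (hcd : ¬ρ.r c d) :
    ∃ θ, ρ ≤ θ ∧ ¬θ.r c d ∧ IsCMI C θ (θ ⊔ theta C c d) := by
  have hchain : ∀ ch ⊆ {s | s ∈ C ∧ ¬s.r c d}, IsChain (· ≤ ·) ch → ∀ s ∈ ch,
      ∃ ub ∈ {s | s ∈ C ∧ ¬s.r c d}, ∀ s ∈ ch, s ≤ ub := by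
    intro ch hch hchain s hs
    have hchC : ch ⊆ C := fun s hs => (hch hs).1
    refine ⟨sSup ch, ⟨hC.sSup_mem ch hchC, fun hsup => ?_⟩, fun _ => le_sSup⟩
    obtain ⟨t, ht, htcd⟩ := (hC.rel_sSup_iff ch hchC ⟨s, hs⟩ hchain.directedOn c d).mp hsup
    exact (hch ht).2 htcd
  obtain ⟨θ, hρθ, hmax⟩ := zorn_le_nonempty₀ _ hchain ρ ⟨hρ, hcd⟩
  obtain ⟨hθC, hθcd⟩ := hmax.prop
  refine ⟨θ, hρθ, hθcd, hθC, hC.sup_mem hθC (hC.theta_mem c d),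
    lt_of_le_of_ne le_sup_left fun h => hθcd ?_, fun β hβ hθβ => ?_⟩
  · exact (h ▸ le_sup_right : theta C c d ≤ θ) (rel_theta C c d)
  · have hβcd : β.r c d :=
      by_contra fun hβcd => hθβ.ne' (hmax.eq_of_ge ⟨hβ, hβcd⟩ hθβ.le)
    exact sup_le hθβ.le (theta_le hβ hβcd)

theorem CovByIn.exists_isCMI_inf_eq (hC : IsCongLattice C) (hM : CondM C) {χ π : Setoid A}
    (h : CovByIn C χ π) : ∃ θ, IsCMI C θ (π ⊔ θ) ∧ π ⊓ θ = χ := by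
  obtain ⟨c, d, hπcd, hχcd⟩ : ∃ c d, π.r c d ∧ ¬χ.r c d := by
    by_contra! hall
    exact h.lt.not_ge fun c d => hall c d
  obtain ⟨θ, hχθ, hθcd, hθ⟩ := hC.exists_isCMI_of_not_rel h.left_mem hχcd
  have hπθ : π ⊓ θ = χ := by
    rcases h.eq_or_eq (π ⊓ θ) (hC.inf_mem h.right_mem hθ.mem) (le_inf h.lt.le hχθ)
      inf_le_left with hπθ | hπθ
    · exact hπθ
    · exact absurd ((hπθ ▸ inf_le_right : π ≤ θ) hπcd) hθcd
  refine ⟨θ, ?_, hπθ⟩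
  rwa [hθ.cover_eq (h.sup_right hC hM hθ.mem hπθ)] at hθ

theorem exists_isCMI_inf_eq_of_projective (hC : IsCongLattice C) (hM : CondM C) (hP : CondP C)
    {φ p χ π : Setoid A} (hφ : IsCMI C φ p) (h : Projective C (φ, p) (χ, π)) :
    ∃ θ, IsCMI C θ p ∧ Projective C (φ, p) (θ, p) ∧ π ⊓ θ = χ := by
  have hχπ : CovByIn C χ π := h.covByIn hC hM hφ.covByIn
  obtain ⟨θ, hθ, hπθ⟩ := hχπ.exists_isCMI_inf_eq hC hM
  have hup : Persp C (χ, π) (θ, π ⊔ θ) :=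
    ⟨hχπ.left_mem, hχπ.right_mem, hθ.mem, hθ.cover_mem, Or.inl ⟨hπθ.symm, rfl⟩⟩
  have hproj : Projective C (φ, p) (θ, π ⊔ θ) := h.tail hup
  obtain rfl : p = π ⊔ θ := hP φ θ p _ hφ hθ hproj
  exact ⟨θ, hθ, hproj, hπθ⟩

theorem isCMI_of_projective (hC : IsCongLattice C) (hM : CondM C) (hP : CondP C)
    {φ p B : Setoid A} (hφ : IsCMI C φ p) (h : Projective C (φ, p) (B, p)) : IsCMI C B p := by
  have hB : CovByIn C B p := h.covByIn hC hM hφ.covByIn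
  refine ⟨hB.left_mem, hB.right_mem, hB.lt, fun γ hγ hBγ => ?_⟩
  rcases hB.eq_or_eq (p ⊓ γ) (hC.inf_mem hB.right_mem hγ) (le_inf hB.lt.le hBγ.le)
    inf_le_left with hpγ | hpγ
  · -- `I[B, p]` transposes up to `I[γ, p ⊔ γ]`, whose top must be `p` again by (P)
    have hup : Persp C (B, p) (γ, p ⊔ γ) :=
      ⟨hB.left_mem, hB.right_mem, hγ, hC.sup_mem hB.right_mem hγ, Or.inl ⟨hpγ.symm, rfl⟩⟩
    obtain ⟨θ, hθ, -, hθγ⟩ := exists_isCMI_inf_eq_of_projective hC hM hP hφ (h.tail hup)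
    have hγp : γ ≤ p := (hθγ ▸ inf_le_right : γ ≤ θ).trans hθ.lt.le
    exact absurd (hpγ ▸ (inf_eq_right.mpr hγp).symm) hBγ.ne'
  · exact inf_eq_left.mp hpγ

theorem IsCMI.rel_iff (hC : IsCongLattice C) {one : A} (hO : CondO one C) {θ p : Setoid A}
    (hθ : IsCMI C θ p) (x y : A) : θ.r x y ↔ p.r x y ∧ (θ.r one x ↔ θ.r one y) := by
  refine ⟨fun h => ⟨hθ.lt.le h, (θ.trans' · h), (θ.trans' · (θ.symm' h))⟩,
    fun ⟨hp, h⟩ => ?_⟩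
  by_cases hx : θ.r one x
  · exact θ.trans' (θ.symm' hx) (h.mp hx)
  -- outside the `θ`-class of `one`, adding `Θ(one, z)` to `θ` already reaches the cover `p`
  have key : ∀ z, ¬θ.r one z → θ ⊔ theta C one z = p ⊔ theta C one z := fun z hz =>
    le_antisymm (sup_le_sup_right hθ.lt.le _) <| sup_le (hθ.cover_le
      (hC.sup_mem hθ.mem (hC.theta_mem one z)) (lt_of_le_of_ne le_sup_left fun he =>
        hz ((he ▸ le_sup_right : theta C one z ≤ θ) (rel_theta C one z)))) le_sup_right
  refine (hO θ hθ.mem x y).mp ?_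
  rw [key x hx, key y (hx ∘ h.mpr)]
  exact (hO p hθ.cover_mem x y).mpr hp

theorem Setoid.inf_ker_covBy {p : Setoid A} {f : A → Prop} (one : A)
    (hf : ∀ x y, p.r x y → ¬(f x ↔ f y) → p.r one x) (hne : p ⊓ Setoid.ker f ≠ p) :
    p ⊓ Setoid.ker f ⋖ p := by
  refine ⟨lt_of_le_of_ne inf_le_left hne, fun τ hστ hτp => hτp.not_ge fun u v huv => ?_⟩
  have hσ : ∀ {x y}, p.r x y → (f x ↔ f y) → τ.r x y := fun hxy h =>
    hστ.le ⟨hxy, Setoid.ker_def.mpr (propext h)⟩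
  by_cases huv' : f u ↔ f v
  · exact hσ huv huv'
  obtain ⟨x, y, hxy, hxy'⟩ : ∃ x y, τ.r x y ∧ ¬(p ⊓ Setoid.ker f).r x y := by
    by_contra! hall
    exact hστ.not_ge fun x y => hall x y
  have hpxy : p.r x y := hτp.le hxy
  have hfxy : ¬(f x ↔ f y) := fun h => hxy' ⟨hpxy, Setoid.ker_def.mpr (propext h)⟩
  have hp : ∀ {a b}, p.r one a → p.r one b → p.r a b := fun ha hb => p.trans' (p.symm' ha) hb
  have hu : p.r one u := hf u v huv huv'
  have hv : p.r one v := p.trans' hu huv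
  have hx : p.r one x := hf x y hpxy hfxy
  have hy : p.r one y := p.trans' hx hpxy
  -- `p ⊓ ker f` splits the `p`-class of `one` into two blocks, which the pair `(x, y)` joins
  by_cases hfux : f u ↔ f x
  · exact τ.trans' (hσ (hp hu hx) hfux) (τ.trans' hxy (hσ (hp hy hv) (by tauto)))
  · exact τ.trans' (hσ (hp hu hy) (by tauto))
      (τ.trans' (τ.symm' hxy) (hσ (hp hx hv) (by tauto)))

theorem IsCMI.eq_inf_ker (hC : IsCongLattice C) {one : A} (hO : CondO one C) {θ p : Setoid A}
    (hθ : IsCMI C θ p) : θ = p ⊓ Setoid.ker (θ.r one) :=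
  Setoid.ext fun x y => (hθ.rel_iff hC hO x y).trans (and_congr_right' (eq_iff_iff.symm.trans
    Setoid.ker_def.symm))

theorem IsCMI.covBy (hC : IsCongLattice C) {one : A} (hO : CondO one C) {θ p : Setoid A}
    (hθ : IsCMI C θ p) : θ ⋖ p := by
  have hθker := hθ.eq_inf_ker hC hO
  rw [hθker]
  refine Setoid.inf_ker_covBy one (fun x y hxy hθxy => ?_) (hθker.symm.trans_ne hθ.lt.ne)
  by_cases hx : θ.r one x
  · exact hθ.lt.le hx
  · exact p.trans' (hθ.lt.le (by tauto)) (p.symm' hxy)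

/-- The equivalence relation `φ • ψ`, described through the `one`-classes of `φ` and `ψ`. -/
def bulSetoid (one : A) (p φ ψ : Setoid A) : Setoid A :=
  p ⊓ Setoid.ker fun x => (φ.r one x ↔ ψ.r one x)

section Bul

variable (hC : IsCongLattice C) {one : A} (hO : CondO one C) {φ ψ p : Setoid A}

theorem bulSetoid_r (hC : IsCongLattice C) {one : A} (hO : CondO one C) {φ ψ p : Setoid A}
    (hφ : IsCMI C φ p) (hψ : IsCMI C ψ p) : (bulSetoid one p φ ψ).r = Bul p φ ψ := by
  ext x y
  change p.r x y ∧ ((φ.r one x ↔ ψ.r one x) = (φ.r one y ↔ ψ.r one y)) ↔ _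
  rw [Bul, hφ.rel_iff hC hO x y, hψ.rel_iff hC hO x y, eq_iff_iff]
  tauto

theorem bulSetoid_covBy (hC : IsCongLattice C) {one : A} (hO : CondO one C) {φ ψ p : Setoid A}
    (hφ : IsCMI C φ p) (hψ : IsCMI C ψ p) (hne : φ ≠ ψ) : bulSetoid one p φ ψ ⋖ p := by
  refine Setoid.inf_ker_covBy one (fun x y hxy hf => ?_) fun hp => ?_
  · by_contra hx
    have hy : ¬p.r one y := fun hy => hx (p.trans' hy (p.symm' hxy))
    exact hf (iff_of_true (iff_of_false (hx <| hφ.lt.le ·) (hx <| hψ.lt.le ·))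
      (iff_of_false (hy <| hφ.lt.le ·) (hy <| hψ.lt.le ·)))
  · obtain ⟨x, y, hφxy, hψxy⟩ : ∃ x y, φ.r x y ∧ ¬ψ.r x y := by
      by_contra! hall
      exact hne (hφ.eq_of_le hψ fun x y => hall x y)
    have hxy : (bulSetoid one p φ ψ).r x y := hp.ge (hφ.lt.le hφxy)
    rw [bulSetoid_r hC hO hφ hψ] at hxy
    exact hψxy (hxy.2.mp hφxy)

def BulRealized (C : Set (Setoid A)) (φ p θ θ' : Setoid A) : Prop :=
  ∃ σ, IsCMI C σ p ∧ Projective C (φ, p) (σ, p) ∧ σ.r = Bul p θ θ'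

theorem bulRealized_of_le_bulSetoid (hC : IsCongLattice C) (hM : CondM C) {one : A}
    (hO : CondO one C) (hP : CondP C) {φ p M₀ M₂ W : Setoid A} (hφ : IsCMI C φ p)
    (h₀ : IsCMI C M₀ p) (h₂ : IsCMI C M₂ p) (hne : M₀ ≠ M₂)
    (hproj : Projective C (φ, p) (M₂, p)) (hW : W ∈ C) (hWle : W ≤ bulSetoid one p M₀ M₂)
    (hW₀ : ¬W ≤ M₀) : BulRealized C φ p M₀ M₂ := by
  have hbul := bulSetoid_r hC hO h₀ h₂
  have hbulp := bulSetoid_covBy hC hO h₀ h₂ hne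
  have h₀₂ : M₀ ⊓ M₂ ∈ C := hC.inf_mem h₀.mem h₂.mem
  have hXbul : M₀ ⊓ M₂ ⊔ W ≤ bulSetoid one p M₀ M₂ := by
    refine sup_le (fun x y hxy => ?_) hWle
    rw [hbul]
    exact ⟨h₀.lt.le hxy.1, iff_of_true hxy.1 hxy.2⟩
  have hX₀ : M₀ ⊓ (M₀ ⊓ M₂ ⊔ W) = M₀ ⊓ M₂ := by
    refine le_antisymm (fun x y hxy => ⟨hxy.1, ?_⟩) (le_inf inf_le_left le_sup_left)
    have hxy' : (bulSetoid one p M₀ M₂).r x y := hXbul hxy.2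
    rw [hbul] at hxy'
    exact hxy'.2.mp hxy.1
  have hM₀p : M₀ ⋖ p := h₀.covBy hC hO
  have hM₀X : M₀ ⊔ (M₀ ⊓ M₂ ⊔ W) = p :=
    (hM₀p.eq_or_eq le_sup_left (sup_le h₀.lt.le (hXbul.trans hbulp.le))).resolve_left
      fun h => hW₀ (le_sup_right.trans (le_sup_right.trans h.le))
  have hM₀M₂ : M₀ ⊔ M₂ = p := hM₀p.wcovBy.sup_eq (h₂.covBy hC hO).wcovBy hne
  have hdown : Persp C (M₂, p) (M₀ ⊓ M₂, M₀) :=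
    ⟨h₂.mem, h₂.cover_mem, h₀₂, h₀.mem, Or.inr ⟨rfl, hM₀M₂.symm⟩⟩
  have hup : Persp C (M₀ ⊓ M₂, M₀) (M₀ ⊓ M₂ ⊔ W, p) :=
    ⟨h₀₂, h₀.mem, hC.sup_mem h₀₂ hW, h₀.cover_mem,
      Or.inl ⟨hX₀.symm, hM₀X.symm⟩⟩
  have hproj' : Projective C (φ, p) (M₀ ⊓ M₂ ⊔ W, p) := (hproj.tail hdown).tail hup
  have hX := isCMI_of_projective hC hM hP hφ hproj'
  refine ⟨_, hX, hproj', ?_⟩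
  rw [← hbul, ((hX.covBy hC hO).eq_or_eq hXbul hbulp.le).resolve_right hbulp.lt.ne]

theorem bulRealized_of_inf_eq (hC : IsCongLattice C) (hM : CondM C) {one : A}
    (hO : CondO one C) (hP : CondP C) {φ p θ θ' χ π : Setoid A} (hφ : IsCMI C φ p)
    (hθ : IsCMI C θ p) (hθ' : IsCMI C θ' p) (hne : θ ≠ θ')
    (hproj : Projective C (φ, p) (θ', p)) (hχπ : CovByIn C χ π) (h : π ⊓ θ = χ)
    (h' : π ⊓ θ' = χ) : BulRealized C φ p θ θ' := by
  have hπp : π ≤ p := hθ.cover_eq (hχπ.sup_right hC hM hθ.mem h) ▸ le_sup_left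
  have hrel : ∀ {σ x y}, π ⊓ σ = χ → π.r x y → (σ.r x y ↔ χ.r x y) :=
    fun hσ hxy => ⟨fun hs => hσ.le ⟨hxy, hs⟩, fun hc => (hσ.ge hc).2⟩
  refine bulRealized_of_le_bulSetoid hC hM hO hP hφ hθ hθ' hne hproj hχπ.right_mem
    (fun x y hxy => ?_) fun hle => hχπ.lt.ne' (h ▸ (inf_eq_left.mpr hle).symm)
  rw [bulSetoid_r hC hO hθ hθ']
  exact ⟨hπp hxy, (hrel h hxy).trans (hrel h' hxy).symm⟩

theorem bulRealized_trans (hC : IsCongLattice C) (hM : CondM C) {one : A} (hO : CondO one C)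
    (hP : CondP C) {φ p θ θ' : Setoid A} (hφ : IsCMI C φ p) (hθ : IsCMI C θ p)
    (hθ' : IsCMI C θ' p) (hproj : Projective C (φ, p) (θ, p))
    (hproj' : Projective C (φ, p) (θ', p))
    (h : BulRealized C φ p φ θ) (h' : BulRealized C φ p θ θ') (hne : φ ≠ θ') :
    BulRealized C φ p φ θ' := by
  obtain ⟨σ, hσ, -, hσr⟩ := h
  obtain ⟨σ', hσ', hσ'proj, hσ'r⟩ := h'
  have hσσ' : σ ≠ σ' := by
    rintro rfl
    refine hne (Setoid.ext fun x y => ?_)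
    have hxy := congrFun (congrFun (hσr.symm.trans hσ'r) x) y
    simp only [Bul, eq_iff_iff] at hxy
    by_cases hp : p.r x y
    · tauto
    · exact iff_of_false (hp <| hφ.lt.le ·) (hp <| hθ'.lt.le ·)
  by_cases hσσ'φ : σ ⊓ σ' ≤ φ
  · by_cases hφθ'σ : φ ⊓ θ' ≤ σ
    · -- no pair of `p` is separated by `θ` alone or by all of `φ, θ, θ'`: `θ` is `φ • θ'`
      refine ⟨θ, hθ, hproj, ?_⟩
      have hle : bulSetoid one p φ θ' ≤ θ := fun x y hxy => by
        rw [bulSetoid_r hC hO hφ hθ'] at hxy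
        obtain ⟨hp, hiff⟩ := hxy
        by_contra hθxy
        by_cases hφxy : φ.r x y
        · have hσxy : σ.r x y := hφθ'σ ⟨hφxy, hiff.mp hφxy⟩
          rw [hσr] at hσxy
          exact hθxy (hσxy.2.mp hφxy)
        · have hσxy : σ.r x y := hσr ▸ ⟨hp, iff_of_false hφxy hθxy⟩
          have hσ'xy : σ'.r x y := hσ'r ▸ ⟨hp, iff_of_false hθxy (hφxy ∘ hiff.mpr)⟩
          exact hφxy (hσσ'φ ⟨hσxy, hσ'xy⟩)
      rw [← bulSetoid_r hC hO hφ hθ', (((bulSetoid_covBy hC hO hφ hθ' hne).eq_or_eq hle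
        hθ.lt.le).resolve_right hθ.lt.ne)]
    · have hle : φ ⊓ θ' ≤ bulSetoid one p σ σ' := fun x y ⟨hφxy, hθ'xy⟩ => by
        rw [bulSetoid_r hC hO hσ hσ']
        refine ⟨hφ.lt.le hφxy, ?_⟩
        simp only [hσr, hσ'r, Bul]
        tauto
      obtain ⟨X, hX, hXproj, hXr⟩ := bulRealized_of_le_bulSetoid hC hM hO hP hφ hσ hσ' hσσ'
        hσ'proj (hC.inf_mem hφ.mem hθ'.mem) hle hφθ'σ
      refine ⟨X, hX, hXproj, hXr.trans ?_⟩
      ext x y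
      simp only [Bul, hσr, hσ'r]
      tauto
  · refine bulRealized_of_le_bulSetoid hC hM hO hP hφ hφ hθ' hne hproj'
      (hC.inf_mem hσ.mem hσ'.mem) (fun x y hxy => ?_) hσσ'φ
    rw [bulSetoid_r hC hO hφ hθ']
    obtain ⟨⟨hp, hφθ⟩, -, hθθ'⟩ : Bul p φ θ x y ∧ Bul p θ θ' x y :=
      ⟨hσr ▸ hxy.1, hσ'r ▸ hxy.2⟩
    exact ⟨hp, hφθ.trans hθθ'⟩

theorem exists_isCMI_inf_eq_bulRealized (hC : IsCongLattice C) (hM : CondM C) {one : A}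
    (hO : CondO one C) (hP : CondP C) {φ p : Setoid A} (hφ : IsCMI C φ p)
    {I : Setoid A × Setoid A} (h : Projective C (φ, p) I) :
    ∃ θ, IsCMI C θ p ∧ Projective C (φ, p) (θ, p) ∧ I.2 ⊓ θ = I.1 ∧
      (θ = φ ∨ BulRealized C φ p φ θ) := by
  induction h with
  | refl => exact ⟨φ, hφ, .refl, inf_eq_right.mpr hφ.lt.le, Or.inl rfl⟩
  | @tail J K hJ hJK ih =>
    obtain ⟨θ, hθ, hθproj, hJθ, hθφ⟩ := ih
    obtain ⟨-, -, -, -, ⟨hJ₁, hK₂⟩ | ⟨hK₁, hJ₂⟩⟩ := id hJK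
    · obtain ⟨θ', hθ', hθ'proj, hKθ'⟩ :=
        exists_isCMI_inf_eq_of_projective hC hM hP hφ (hJ.tail hJK)
      have hJK₂ : J.2 ≤ K.2 := hK₂ ▸ le_sup_left
      have hJθ' : J.2 ⊓ θ' = J.1 := calc
        J.2 ⊓ θ' = J.2 ⊓ (K.2 ⊓ θ') := by rw [← inf_assoc, inf_eq_left.mpr hJK₂]
        _ = J.1 := by rw [hKθ', hJ₁]
      refine ⟨θ', hθ', hθ'proj, hKθ', ?_⟩
      rcases eq_or_ne θ θ' with rfl | hθθ'
      · exact hθφ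
      have hb := bulRealized_of_inf_eq hC hM hO hP hφ hθ hθ' hθθ' hθ'proj
        (Projective.covByIn hC hM hJ hφ.covByIn) hJθ hJθ'
      rcases hθφ with rfl | hθφ
      · exact Or.inr hb
      rcases eq_or_ne φ θ' with rfl | hφθ'
      · exact Or.inl rfl
      exact Or.inr (bulRealized_trans hC hM hO hP hφ hθ hθ' hθproj hθ'proj hθφ hb hφθ')
    · refine ⟨θ, hθ, hθproj, ?_, hθφ⟩
      have hKJ₂ : K.2 ≤ J.2 := hJ₂ ▸ le_sup_left
      calc K.2 ⊓ θ = K.2 ⊓ (J.2 ⊓ θ) := by rw [← inf_assoc, inf_eq_left.mpr hKJ₂]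
        _ = K.1 := by rw [hJθ, hK₁]

theorem PIP.bulRealized (hC : IsCongLattice C) (hM : CondM C) {one : A} (hO : CondO one C)
    (hP : CondP C) {φ ψ p : Setoid A} (hφ : IsCMI C φ p) (hψ : IsCMI C ψ p) (hne : φ ≠ ψ)
    (h : PIP C φ ψ) : BulRealized C φ p φ ψ := by
  obtain ⟨p', q', hφ', hψ', hproj⟩ := h
  obtain rfl : p' = p := hφ'.cover_eq hφ.covByIn
  obtain rfl : q' = p' := hψ'.cover_eq hψ.covByIn
  obtain ⟨θ, hθ, -, hθψ, hθφ⟩ := exists_isCMI_inf_eq_bulRealized hC hM hO hP hφ hproj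
  obtain rfl : θ = ψ := (inf_eq_right.mpr hθ.lt.le).symm.trans hθψ
  exact hθφ.resolve_left hne.symm

theorem persp_of_rel_eq_bul (hC : IsCongLattice C) {one : A} (hO : CondO one C)
    {φ ψ p σ : Setoid A} (hφ : IsCMI C φ p) (hψ : IsCMI C ψ p) (hne : φ ≠ ψ)
    (hσ : σ ∈ C) (hσr : σ.r = Bul p φ ψ) : Persp C (φ, p) (φ ⊓ ψ, σ) := by
  have hσp : σ ⋖ p := Setoid.eq_iff_rel_eq.mpr (hσr.trans (bulSetoid_r hC hO hφ hψ).symm) ▸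
    bulSetoid_covBy hC hO hφ hψ hne
  have hinf : σ ⊓ φ = φ ⊓ ψ := by
    refine le_antisymm (fun x y hxy => ⟨hxy.2, ?_⟩) (le_inf (fun x y hxy => ?_) inf_le_left)
    · exact hσr ▸ ⟨hφ.lt.le hxy.1, iff_of_true hxy.1 hxy.2⟩
    · exact (show Bul p φ ψ x y from hσr ▸ hxy.1).2.mp hxy.2
  have hσφ : σ ≠ φ := by
    rintro rfl
    rw [inf_idem, left_eq_inf] at hinf
    exact hne (hφ.eq_of_le hψ hinf)
  exact ⟨hφ.mem, hφ.cover_mem, hC.inf_mem hφ.mem hψ.mem, hσ,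
    Or.inr ⟨hinf.symm, (hσp.wcovBy.sup_eq (hφ.covBy hC hO).wcovBy hσφ).symm⟩⟩

theorem pip_of_rel_eq_bul (hC : IsCongLattice C) {one : A} (hO : CondO one C)
    {φ ψ p σ : Setoid A} (hφ : IsCMI C φ p) (hψ : IsCMI C ψ p) (hne : φ ≠ ψ)
    (hσ : σ ∈ C) (hσr : σ.r = Bul p φ ψ) : PIP C φ ψ := by
  have hφψ := persp_of_rel_eq_bul hC hO hφ hψ hne hσ hσr
  have hψφ := persp_of_rel_eq_bul hC hO hψ hφ hne.symm hσ
    (hσr.trans (funext₂ fun _ _ => propext (and_congr_right' iff_comm)))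
  rw [inf_comm] at hψφ
  exact ⟨p, p, hφ, hψ, (Relation.ReflTransGen.single hφψ).tail hψφ.symm⟩

theorem stmt8_general (one : A) (C : Set (Setoid A))
    (hInf : ∀ S ⊆ C, sInf S ∈ C) (hSup : ∀ S ⊆ C, sSup S ∈ C)
    (hDir : ∀ D ⊆ C, D.Nonempty → DirectedOn (· ≤ ·) D →
      ∀ x y : A, (sSup D).r x y ↔ ∃ s ∈ D, s.r x y)
    (hM : ∀ x ∈ C, ∀ y ∈ C, ∀ z ∈ C, x ≤ z → x ⊔ y ⊓ z = (x ⊔ y) ⊓ z)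
    (hO : ∀ α ∈ C, ∀ a b : A, α ⊔ theta C one a = α ⊔ theta C one b ↔ α.r a b)
    (hP : ∀ φ ψ p q : Setoid A, IsCMI C φ p → IsCMI C ψ q →
      Projective C (φ, p) (ψ, q) → p = q)
    (φ ψ p : Setoid A) (hφ : IsCMI C φ p) (hψ : IsCMI C ψ p) (hne : φ ≠ ψ) :
    (PIP C φ ψ ↔ ∃ σ q : Setoid A, IsCMI C σ q ∧ σ.r = Bul p φ ψ) ∧
    (PIP C φ ψ ↔ ∃ σ ∈ C, σ.r = Bul p φ ψ) := by
  have hC : IsCongLattice C := ⟨hInf, hSup, hDir⟩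
  have forward : PIP C φ ψ → ∃ σ, IsCMI C σ p ∧ σ.r = Bul p φ ψ := fun h => by
    obtain ⟨σ, hσ, -, hσr⟩ := PIP.bulRealized hC hM hO hP hφ hψ hne h
    exact ⟨σ, hσ, hσr⟩
  have backward : ∀ σ ∈ C, σ.r = Bul p φ ψ → PIP C φ ψ := fun σ hσ hσr =>
    pip_of_rel_eq_bul hC hO hφ hψ hne hσ hσr
  refine ⟨⟨fun h => ?_, fun ⟨σ, _, hσ, hσr⟩ => backward σ hσ.mem hσr⟩,
    ⟨fun h => ?_, fun ⟨σ, hσ, hσr⟩ => backward σ hσ hσr⟩⟩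
  · obtain ⟨σ, hσ, hσr⟩ := forward h
    exact ⟨σ, p, hσ, hσr⟩
  · obtain ⟨σ, hσ, hσr⟩ := forward h
    exact ⟨σ, hσ.mem, hσr⟩

/-- Corollary 11: for distinct `φ, ψ ∈ Cm` with `φ⁺ = ψ⁺ = p`, the conditions
`φ ∼ ψ`, `φ • ψ ∈ Cm` and `φ • ψ ∈ C` are equivalent. -/
theorem stmt8 (one : A) (C : Set (Setoid A))
    (hInf : ∀ S ⊆ C, sInf S ∈ C) (hSup : ∀ S ⊆ C, sSup S ∈ C)
    (hDir : ∀ D ⊆ C, D.Nonempty → DirectedOn (· ≤ ·) D →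
      ∀ x y : A, (sSup D).r x y ↔ ∃ s ∈ D, s.r x y)
    (hM : ∀ x ∈ C, ∀ y ∈ C, ∀ z ∈ C, x ≤ z → x ⊔ y ⊓ z = (x ⊔ y) ⊓ z)
    (hO : ∀ α ∈ C, ∀ a b : A, α ⊔ theta C one a = α ⊔ theta C one b ↔ α.r a b)
    (hR : ∀ α ∈ C, ∀ β ∈ C, (∀ x : A, α.r one x ↔ β.r one x) → α = β)
    (hP : ∀ φ ψ p q : Setoid A, IsCMI C φ p → IsCMI C ψ q →
      Projective C (φ, p) (ψ, q) → p = q)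
    (φ ψ p : Setoid A) (hφ : IsCMI C φ p) (hψ : IsCMI C ψ p) (hne : φ ≠ ψ) :
    (PIP C φ ψ ↔ ∃ σ q : Setoid A, IsCMI C σ q ∧ σ.r = Bul p φ ψ) ∧
    (PIP C φ ψ ↔ ∃ σ ∈ C, σ.r = Bul p φ ψ) :=
  stmt8_general one C hInf hSup hDir hM hO hP φ ψ p hφ hψ hne
end Bul
end
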